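/- arXiv:1403.5873 — 2 statements merged into one kernel-verified Lean document; each statement's English description precedes it below -/
import Mathlib

section
/- Let C be a regular multi-pointed category with kernels. Then C has enough trivial objects if and only if for every relation (σ1, σ2): S ⇉ X on an object X and every morphism n with codomain S, whenever σ1·n ∈ N and σ2·n ∈ N one has n ∈ N. -/
/-!
With enough trivial objects, `N` is reflected by monomorphisms: if `n ≫ m ∈ N` factors through
a trivial object `T`, then `n` factors through the pullback of the mono `m` along `T → X`, a
subobject of `T`. The `N`-kernel `K` of `𝟙 X` is then trivial, and every `N`-morphism into `X`
factors through it, so a pair of `N`-morphisms into `X` pairs to a morphism factoring through the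
trivial `K ⨯ K`; applied to the jointly monic legs of a relation this gives the condition.
Conversely, the condition applied to the relations `(m, m)` for a mono `m` and `(π₁, π₂)` on
`X ⨯ X` gives closure under subobjects and squares, and the `N`-kernel of `𝟙 Y`, a mono in `N`,
is trivial and factors every `N`-morphism into `Y`.
-/

open CategoryTheory CategoryTheory.Limits

universe v u

namespace Paper

variable {𝒞 : Type u} [Category.{v} 𝒞]

/-- `f` is a regular epimorphism: it is a coequaliser of some pair of morphisms. -/
def IsRegEpi {X Y : 𝒞} (f : X ⟶ Y) : Prop :=
  ∃ (Z : 𝒞) (a b : Z ⟶ X), a ≫ f = b ≫ f ∧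
    ∀ {T : 𝒞} (h : X ⟶ T), a ≫ h = b ≫ h → ∃! u : Y ⟶ T, f ≫ u = h

/-- Regular epimorphisms are pullback-stable. -/
def RegEpisStable (𝒞 : Type u) [Category.{v} 𝒞] : Prop :=
  ∀ {P X Y Z : 𝒞} (p₁ : P ⟶ X) (p₂ : P ⟶ Y) (f : X ⟶ Z) (g : Y ⟶ Z),
    IsPullback p₁ p₂ f g → IsRegEpi g → IsRegEpi p₁

/-- Every kernel pair admits a coequaliser. -/
def KernelPairsHaveCoequalisers (𝒞 : Type u) [Category.{v} 𝒞] : Prop :=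
  ∀ {R X Y : 𝒞} (f : X ⟶ Y) (a b : R ⟶ X), IsKernelPair f a b →
    ∃ (Q : 𝒞) (q : X ⟶ Q), a ≫ q = b ≫ q ∧
      ∀ {T : 𝒞} (h : X ⟶ T), a ≫ h = b ≫ h → ∃! u : Q ⟶ T, q ≫ u = h

/-- A relation from `X` to `Y`: a jointly monomorphic span. -/
structure Rel (𝒞 : Type u) [Category.{v} 𝒞] (X Y : 𝒞) where
  R : 𝒞
  p1 : R ⟶ X
  p2 : R ⟶ Y
  jm : ∀ {Z : 𝒞} (a b : Z ⟶ R), a ≫ p1 = b ≫ p1 → a ≫ p2 = b ≫ p2 → a = b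

variable {X Y Z : 𝒞}

/-- `ρ` is a subrelation of `σ`. -/
def Rel.le (ρ σ : Rel 𝒞 X Y) : Prop :=
  ∃ j : ρ.R ⟶ σ.R, j ≫ σ.p1 = ρ.p1 ∧ j ≫ σ.p2 = ρ.p2

/-- `ρ` and `σ` are the same relation (isomorphic as subobjects of `X × Y`). -/
def Rel.equiv (ρ σ : Rel 𝒞 X Y) : Prop := ρ.le σ ∧ σ.le ρ

/-- The opposite relation. -/
def Rel.op (ρ : Rel 𝒞 X Y) : Rel 𝒞 Y X :=
  ⟨ρ.R, ρ.p2, ρ.p1, fun a b h2 h1 => ρ.jm a b h1 h2⟩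

/-- A morphism viewed as a relation. -/
def homRel (f : X ⟶ Y) : Rel 𝒞 X Y :=
  ⟨X, 𝟙 X, f, fun a b h _ => by simpa using h⟩

/-- The discrete (diagonal) relation on `X`. -/
def diagRel (X : 𝒞) : Rel 𝒞 X X := homRel (𝟙 X)

/-- The kernel pair `Eq(f)` of `f` as a relation on `X`. -/
noncomputable def kerPairRel [HasPullbacks 𝒞] (f : X ⟶ Y) : Rel 𝒞 X X :=
  ⟨pullback f f, pullback.fst f f, pullback.snd f f,
    fun a b h1 h2 => pullback.hom_ext h1 h2⟩

/-- `τ` is the composite `σρ` (first `ρ` from `X` to `Y`, then `σ` from `Y` to `Z`),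
i.e. the (regular epi, jointly mono) factorisation of the span induced on the
pullback of `ρ.p2` and `σ.p1`. -/
def IsRelComp [HasPullbacks 𝒞] (σ : Rel 𝒞 Y Z) (ρ : Rel 𝒞 X Y) (τ : Rel 𝒞 X Z) : Prop :=
  ∃ e : pullback ρ.p2 σ.p1 ⟶ τ.R, IsRegEpi e ∧
    e ≫ τ.p1 = pullback.fst ρ.p2 σ.p1 ≫ ρ.p1 ∧
    e ≫ τ.p2 = pullback.snd ρ.p2 σ.p1 ≫ σ.p2

def Rel.IsReflexive (ρ : Rel 𝒞 X X) : Prop :=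
  ∃ r : X ⟶ ρ.R, r ≫ ρ.p1 = 𝟙 X ∧ r ≫ ρ.p2 = 𝟙 X

def Rel.IsSymmetric (ρ : Rel 𝒞 X X) : Prop :=
  ∃ s : ρ.R ⟶ ρ.R, s ≫ ρ.p1 = ρ.p2 ∧ s ≫ ρ.p2 = ρ.p1

def Rel.IsTransitive [HasPullbacks 𝒞] (ρ : Rel 𝒞 X X) : Prop :=
  ∃ t : pullback ρ.p2 ρ.p1 ⟶ ρ.R,
    t ≫ ρ.p1 = pullback.fst ρ.p2 ρ.p1 ≫ ρ.p1 ∧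
    t ≫ ρ.p2 = pullback.snd ρ.p2 ρ.p1 ≫ ρ.p2

def Rel.IsEquivalence [HasPullbacks 𝒞] (ρ : Rel 𝒞 X X) : Prop :=
  ρ.IsReflexive ∧ ρ.IsSymmetric ∧ ρ.IsTransitive

/-- A finitely complete category is a Mal'tsev category when every reflexive
relation in it is an equivalence relation. -/
def IsMaltsev (𝒞 : Type u) [Category.{v} 𝒞] [HasPullbacks 𝒞] : Prop :=
  ∀ {X : 𝒞} (ρ : Rel 𝒞 X X), ρ.IsReflexive → ρ.IsEquivalence

/-- A square of type (1): split epimorphisms `f` (with section `s`) and `g`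
(with section `t`), regular epimorphisms `c` and `d`, with `f·c = d·g` and
`s·d = c·t`. -/
structure IsSquare1 {A B E D : 𝒞} (f : A ⟶ B) (s : B ⟶ A) (g : E ⟶ D) (t : D ⟶ E)
    (c : E ⟶ A) (d : D ⟶ B) : Prop where
  sec_f : s ≫ f = 𝟙 B
  sec_g : t ≫ g = 𝟙 D
  regepi_c : IsRegEpi c
  regepi_d : IsRegEpi d
  comm1 : c ≫ f = g ≫ d
  comm2 : d ≫ s = t ≫ c

/-- `N` is an ideal of morphisms. -/
def IsIdeal (N : MorphismProperty 𝒞) : Prop :=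
  ∀ {X Y Z : 𝒞} (f : X ⟶ Y) (g : Y ⟶ Z), N f ∨ N g → N (f ≫ g)

/-- `n` is an `N`-kernel of `f`. -/
def IsNKernel (N : MorphismProperty 𝒞) {X Y K : 𝒞} (f : X ⟶ Y) (n : K ⟶ X) : Prop :=
  N (n ≫ f) ∧ ∀ {Z : 𝒞} (m : Z ⟶ X), N (m ≫ f) → ∃! u : Z ⟶ K, u ≫ n = m

/-- Every morphism admits an `N`-kernel. -/
def HasNKernels (N : MorphismProperty 𝒞) : Prop :=
  ∀ {X Y : 𝒞} (f : X ⟶ Y), ∃ (K : 𝒞) (n : K ⟶ X), IsNKernel N f n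

/-- `τ` is the largest star subrelation `ρ*` of the relation `ρ`. -/
def IsLargestStarSub (N : MorphismProperty 𝒞) (ρ τ : Rel 𝒞 X Y) : Prop :=
  τ.le ρ ∧ N τ.p1 ∧ ∀ σ : Rel 𝒞 X Y, σ.le ρ → N σ.p1 → σ.le τ

/-- `(s1, s2)` is the star-kernel of `f`: the universal star coequalised by `f`. -/
def IsStarKernel (N : MorphismProperty 𝒞) {S X Y : 𝒞} (f : X ⟶ Y) (s1 s2 : S ⟶ X) : Prop :=
  N s1 ∧ s1 ≫ f = s2 ≫ f ∧
    ∀ {T : 𝒞} (t1 t2 : T ⟶ X), N t1 → t1 ≫ f = t2 ≫ f →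
      ∃! u : T ⟶ S, u ≫ s1 = t1 ∧ u ≫ s2 = t2

/-- `(ν1, ν2)` is the star of the pullback relation of `(g, δ)`: the universal
pair with `ν1 ∈ N` and `δ·ν1 = g·ν2`. -/
def IsStarPullbackRel (N : MorphismProperty 𝒞) {W E D P : 𝒞} (δ : W ⟶ D) (g : E ⟶ D)
    (ν1 : P ⟶ W) (ν2 : P ⟶ E) : Prop :=
  N ν1 ∧ ν1 ≫ δ = ν2 ≫ g ∧
    ∀ {T : 𝒞} (t1 : T ⟶ W) (t2 : T ⟶ E), N t1 → t1 ≫ δ = t2 ≫ g →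
      ∃! u : T ⟶ P, u ≫ ν1 = t1 ∧ u ≫ ν2 = t2

/-- `f` is a coequaliser of `(s1, s2)`. -/
def IsCoeqOf {S X Y : 𝒞} (f : X ⟶ Y) (s1 s2 : S ⟶ X) : Prop :=
  s1 ≫ f = s2 ≫ f ∧ ∀ {T : 𝒞} (h : X ⟶ T), s1 ≫ h = s2 ≫ h → ∃! u : Y ⟶ T, f ≫ u = h

/-- Star-regularity: every regular epimorphism is a coequaliser of a star. -/
def StarRegular (𝒞 : Type u) [Category.{v} 𝒞] (N : MorphismProperty 𝒞) : Prop :=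
  ∀ {X Y : 𝒞} (f : X ⟶ Y), IsRegEpi f →
    ∃ (S : 𝒞) (s1 s2 : S ⟶ X), N s1 ∧ IsCoeqOf f s1 s2

/-- `f` is saturating: the induced morphism between the `N`-kernels of the
identities is a regular epimorphism. -/
def Saturating (N : MorphismProperty 𝒞) {X Y : 𝒞} (f : X ⟶ Y) : Prop :=
  ∀ {KX KY : 𝒞} (nX : KX ⟶ X) (nY : KY ⟶ Y), IsNKernel N (𝟙 X) nX → IsNKernel N (𝟙 Y) nY →
    ∀ u : KX ⟶ KY, u ≫ nY = nX ≫ f → IsRegEpi u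

/-- `X` is an `N`-trivial object. -/
def NTrivial (N : MorphismProperty 𝒞) (X : 𝒞) : Prop := N (𝟙 X)

/-- The multi-pointed category has enough trivial objects: `N` is a closed ideal and
`N`-trivial objects are closed under subobjects and squares. -/
def EnoughTrivialObjects [HasBinaryProducts 𝒞] (N : MorphismProperty 𝒞) : Prop :=
  (∀ {X Y : 𝒞} (f : X ⟶ Y), N f → ∃ (T : 𝒞) (p : X ⟶ T) (q : T ⟶ Y),
      NTrivial N T ∧ p ≫ q = f) ∧
  (∀ {S X : 𝒞} (m : S ⟶ X), Mono m → NTrivial N X → NTrivial N S) ∧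
  (∀ X : 𝒞, NTrivial N X → NTrivial N (X ⨯ X))

/-- A square of type (1) is a star-regular pushout when `(c g°)* = f° d*`. -/
def IsStarRegularPushout [HasPullbacks 𝒞] (N : MorphismProperty 𝒞) {A B E D : 𝒞}
    (f : A ⟶ B) (g : E ⟶ D) (c : E ⟶ A) (d : D ⟶ B) : Prop :=
  ∀ (ρ τ μ : Rel 𝒞 D A) (ds : Rel 𝒞 D B),
    IsRelComp (homRel c) (Rel.op (homRel g)) ρ → IsLargestStarSub N ρ τ →
    IsLargestStarSub N (homRel d) ds → IsRelComp (Rel.op (homRel f)) ds μ →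
    τ.equiv μ

/-- 2-star-permutability: `Eq(f) Eq(g)* = Eq(g) Eq(f)*` for all regular
epimorphisms `f`, `g` with the same domain. -/
def TwoStarPermutable (𝒞 : Type u) [Category.{v} 𝒞] [HasPullbacks 𝒞]
    (N : MorphismProperty 𝒞) : Prop :=
  ∀ {X Y Z : 𝒞} (f : X ⟶ Y) (g : X ⟶ Z), IsRegEpi f → IsRegEpi g →
    ∀ (sf sg : Rel 𝒞 X X), IsLargestStarSub N (kerPairRel f) sf →
      IsLargestStarSub N (kerPairRel g) sg →
    ∀ (τ₁ τ₂ : Rel 𝒞 X X), IsRelComp (kerPairRel f) sg τ₁ →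
      IsRelComp (kerPairRel g) sf τ₂ → τ₁.equiv τ₂

section Pointed

variable [HasZeroMorphisms 𝒞]

/-- `k` is a kernel of `f`. -/
def IsKernelOf {K X Y : 𝒞} (k : K ⟶ X) (f : X ⟶ Y) : Prop :=
  k ≫ f = 0 ∧ ∀ {Z : 𝒞} (m : Z ⟶ X), m ≫ f = 0 → ∃! u : Z ⟶ K, u ≫ k = m

/-- `f` is a cokernel of `k`. -/
def IsCokernelOf {X Y K : 𝒞} (f : X ⟶ Y) (k : K ⟶ X) : Prop :=
  k ≫ f = 0 ∧ ∀ {T : 𝒞} (h : X ⟶ T), k ≫ h = 0 → ∃! u : Y ⟶ T, f ≫ u = h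

/-- Short exact sequence `K → X ↠ Y`. -/
def IsShortExact {K X Y : 𝒞} (k : K ⟶ X) (f : X ⟶ Y) : Prop :=
  IsKernelOf k f ∧ IsCokernelOf f k

/-- Subtractivity: every reflexive, left punctual relation is right punctual. -/
def IsSubtractive (𝒞 : Type u) [Category.{v} 𝒞] [HasZeroMorphisms 𝒞] : Prop :=
  ∀ {X : 𝒞} (ρ : Rel 𝒞 X X), ρ.IsReflexive →
    (∃ l : X ⟶ ρ.R, l ≫ ρ.p1 = 𝟙 X ∧ l ≫ ρ.p2 = 0) →
    (∃ r : X ⟶ ρ.R, r ≫ ρ.p1 = 0 ∧ r ≫ ρ.p2 = 𝟙 X)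

end Pointed

def RelsReflectN (N : MorphismProperty 𝒞) : Prop :=
  ∀ {X Z : 𝒞} (σ : Rel 𝒞 X X) (n : Z ⟶ σ.R), N (n ≫ σ.p1) → N (n ≫ σ.p2) → N n

def Rel.ofMono (m : Y ⟶ X) [Mono m] : Rel 𝒞 X X :=
  ⟨Y, m, m, fun _ _ h _ => (cancel_mono m).1 h⟩

noncomputable def Rel.total (X : 𝒞) [HasBinaryProduct X X] : Rel 𝒞 X X :=
  ⟨X ⨯ X, prod.fst, prod.snd, fun _ _ h1 h2 => prod.hom_ext h1 h2⟩

theorem Rel.mono_lift (σ : Rel 𝒞 X Y) [HasBinaryProduct X Y] : Mono (prod.lift σ.p1 σ.p2) :=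
  ⟨fun a b h => σ.jm a b (by simpa only [Category.assoc, prod.lift_fst] using h =≫ prod.fst)
    (by simpa only [Category.assoc, prod.lift_snd] using h =≫ prod.snd)⟩

section

variable {N : MorphismProperty 𝒞}

theorem NTrivial.mem_of_source (hN : IsIdeal N) {T : 𝒞} (hT : NTrivial N T) (g : T ⟶ Y) :
    N g := by
  simpa using hN (𝟙 T) g (Or.inl hT)

theorem NTrivial.mem_of_target (hN : IsIdeal N) {T : 𝒞} (hT : NTrivial N T) (f : X ⟶ T) :
    N f := by
  simpa using hN f (𝟙 T) (Or.inr hT)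

theorem IsNKernel.mono (hN : IsIdeal N) {K : 𝒞} {f : X ⟶ Y} {k : K ⟶ X}
    (hk : IsNKernel N f k) : Mono k := by
  refine ⟨fun a b hab => ?_⟩
  have hak : N ((a ≫ k) ≫ f) := by
    rw [Category.assoc]
    exact hN a _ (Or.inr hk.1)
  obtain ⟨u, -, hu⟩ := hk.2 (a ≫ k) hak
  rw [hu a rfl, hu b hab.symm]

theorem IsNKernel.mem_of_id {K : 𝒞} {k : K ⟶ X} (hk : IsNKernel N (𝟙 X) k) : N k := by
  simpa using hk.1

theorem IsNKernel.exists_lift_of_id {K : 𝒞} {k : K ⟶ X} (hk : IsNKernel N (𝟙 X) k)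
    {f : Y ⟶ X} (hf : N f) : ∃ u : Y ⟶ K, u ≫ k = f :=
  (hk.2 f (by simpa using hf)).exists

section Enough

variable [HasPullbacks 𝒞] [HasBinaryProducts 𝒞]

theorem EnoughTrivialObjects.mem_of_comp_mono (hN : IsIdeal N) (hE : EnoughTrivialObjects N)
    {W : 𝒞} {n : W ⟶ Y} (m : Y ⟶ X) [Mono m] (hnm : N (n ≫ m)) : N n := by
  obtain ⟨T, p, q, hT, hpq⟩ := hE.1 _ hnm
  have hP : NTrivial N (pullback m q) := hE.2.1 (pullback.snd m q) inferInstance hT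
  rw [← pullback.lift_fst n p hpq.symm]
  exact hN _ _ (Or.inr (hP.mem_of_source hN _))

theorem EnoughTrivialObjects.nTrivial_of_nKernel_id (hN : IsIdeal N)
    (hE : EnoughTrivialObjects N) {K : 𝒞} {k : K ⟶ X} (hk : IsNKernel N (𝟙 X) k) :
    NTrivial N K := by
  have := hk.mono hN
  exact hE.mem_of_comp_mono hN k (by simpa using hk.mem_of_id)

theorem EnoughTrivialObjects.prod_lift_mem (hN : IsIdeal N) (hE : EnoughTrivialObjects N)
    (hker : HasNKernels N) {W : 𝒞} {f g : W ⟶ X} (hf : N f) (hg : N g) : N (prod.lift f g) := by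
  obtain ⟨K, k, hk⟩ := hker (𝟙 X)
  obtain ⟨u, rfl⟩ := hk.exists_lift_of_id hf
  obtain ⟨v, rfl⟩ := hk.exists_lift_of_id hg
  have hKK : NTrivial N (K ⨯ K) := hE.2.2 K (hE.nTrivial_of_nKernel_id hN hk)
  rw [← prod.lift_map]
  exact hN _ _ (Or.inl (hKK.mem_of_target hN _))

theorem EnoughTrivialObjects.relsReflectN (hN : IsIdeal N) (hE : EnoughTrivialObjects N)
    (hker : HasNKernels N) : RelsReflectN N := by
  intro X Z σ n h1 h2
  have := σ.mono_lift
  refine hE.mem_of_comp_mono hN (prod.lift σ.p1 σ.p2) ?_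
  rw [prod.comp_lift]
  exact hE.prod_lift_mem hN hker h1 h2

end Enough

theorem RelsReflectN.nTrivial_of_mono (hR : RelsReflectN N) {S : 𝒞} (m : S ⟶ X) [Mono m]
    (hm : N m) : NTrivial N S :=
  hR (Rel.ofMono m) (𝟙 S) (by simpa [Rel.ofMono] using hm) (by simpa [Rel.ofMono] using hm)

theorem RelsReflectN.enoughTrivialObjects [HasBinaryProducts 𝒞] (hN : IsIdeal N)
    (hker : HasNKernels N) (hR : RelsReflectN N) : EnoughTrivialObjects N := by
  refine ⟨fun {_ Y} f hf => ?_, fun m hm hX => ?_, fun X hX => ?_⟩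
  · obtain ⟨K, k, hk⟩ := hker (𝟙 Y)
    have := hk.mono hN
    obtain ⟨u, hu⟩ := hk.exists_lift_of_id hf
    exact ⟨K, u, k, hR.nTrivial_of_mono k hk.mem_of_id, hu⟩
  · exact hR.nTrivial_of_mono m (hX.mem_of_target hN m)
  · exact hR (Rel.total X) (𝟙 _)
      (by simpa [Rel.total] using hX.mem_of_target hN (prod.fst : X ⨯ X ⟶ X))
      (by simpa [Rel.total] using hX.mem_of_target hN (prod.snd : X ⨯ X ⟶ X))

end

theorem statement9_general [HasFiniteLimits 𝒞]
    (N : MorphismProperty 𝒞) (hN : IsIdeal N) (hker : HasNKernels N) :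
    EnoughTrivialObjects N ↔
      ∀ {X Z : 𝒞} (σ : Rel 𝒞 X X) (n : Z ⟶ σ.R),
        N (n ≫ σ.p1) → N (n ≫ σ.p2) → N n :=
  ⟨fun hE => hE.relsReflectN hN hker, fun hR => RelsReflectN.enoughTrivialObjects hN hker hR⟩

/-- A regular multi-pointed category with kernels has enough
trivial objects iff for every relation `(σ1, σ2) : S ⇉ X` and every morphism `n`
into `S`, `σ1·n ∈ N` and `σ2·n ∈ N` imply `n ∈ N`. -/
theorem statement9 [HasFiniteLimits 𝒞]
    (hcoeq : KernelPairsHaveCoequalisers 𝒞) (hstab : RegEpisStable 𝒞)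
    (N : MorphismProperty 𝒞) (hN : IsIdeal N) (hker : HasNKernels N) :
    EnoughTrivialObjects N ↔
      ∀ {X Z : 𝒞} (σ : Rel 𝒞 X X) (n : Z ⟶ σ.R),
        N (n ≫ σ.p1) → N (n ≫ σ.p2) → N n :=
  statement9_general N hN hker

end Paper
end

section
/- Let C be a star-regular category in which every regular epimorphism is saturating, which has enough trivial objects, and in which N-trivial objects are closed under binary products. Then C is a 2-star-permutable category if and only if the Star-Upper Cuboid Lemma holds in C: for every commutative diagram of the form (7) — in which g: C → D, f: A → B and ḡ: Eq(c)* → S are regular epimorphisms, the three diamonds are stars of pullback relations of these regular epimorphisms along δ: W → D, β: Y → B and δ̄: Eq(w)* → S respectively (so that P = (Eq(w)* ×_S Eq(c)*)*), and the two middle rows Eq(w)* ⇉ W →> Y and Eq(c)* ⇉ C →> A are short star-exact sequences — if the lower row σ: S ⇉ D together with d: D → B is a short star-exact sequence, then the upper row π: P ⇉ (W×_D C)* together with λ: (W×_D C)* → (Y×_B A)* is a short star-exact sequence. -/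
open CategoryTheory CategoryTheory.Limits

universe v u

namespace Paper

variable {𝒞 : Type u} [Category.{v} 𝒞]

variable {X Y Z : 𝒞}

/-- The Star-Upper Cuboid Lemma: in any diagram of the form (7) — the three
diamonds being stars of pullback relations of the regular epimorphisms `g`, `f`,
`ḡ` along `δ`, `β`, `δ̄`, and the two middle rows being short star-exact
sequences — if the lower row is a short star-exact sequence then so is the upper
row. -/
def StarUpperCuboidLemma (𝒞 : Type u) [Category.{v} 𝒞] (N : MorphismProperty 𝒞) : Prop :=
  ∀ {W Y E A D B SW SC S V U P : 𝒞}
    (w : W ⟶ Y) (c : E ⟶ A) (d : D ⟶ B) (g : E ⟶ D) (f : A ⟶ B)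
    (δ : W ⟶ D) (β : Y ⟶ B)
    (sw1 sw2 : SW ⟶ W) (sc1 sc2 : SC ⟶ E) (s1 s2 : S ⟶ D)
    (gbar : SC ⟶ S) (δbar : SW ⟶ S)
    (ν1 : V ⟶ W) (ν2 : V ⟶ E) (χ1 : U ⟶ Y) (χ2 : U ⟶ A)
    (τ1 : P ⟶ SW) (τ2 : P ⟶ SC) (lam : V ⟶ U) (π1 π2 : P ⟶ V),
    -- regular epimorphisms
    IsRegEpi g → IsRegEpi f → IsRegEpi gbar →
    -- commutativity of the two squares
    c ≫ f = g ≫ d → w ≫ β = δ ≫ d →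
    -- the star (σ1, σ2) : S ⇉ D
    N s1 →
    -- the two middle rows are short star-exact sequences
    IsStarKernel N w sw1 sw2 → IsCoeqOf w sw1 sw2 →
    IsStarKernel N c sc1 sc2 → IsCoeqOf c sc1 sc2 →
    -- ḡ and δ̄ commute with the stars
    gbar ≫ s1 = sc1 ≫ g → gbar ≫ s2 = sc2 ≫ g →
    δbar ≫ s1 = sw1 ≫ δ → δbar ≫ s2 = sw2 ≫ δ →
    -- the three diamonds are stars of pullback relations
    IsStarPullbackRel N δ g ν1 ν2 → IsStarPullbackRel N β f χ1 χ2 →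
    IsStarPullbackRel N δbar gbar τ1 τ2 →
    -- λ and π = (π1, π2), commuting as in diagram (7)
    lam ≫ χ1 = ν1 ≫ w → lam ≫ χ2 = ν2 ≫ c →
    π1 ≫ ν1 = τ1 ≫ sw1 → π1 ≫ ν2 = τ2 ≫ sc1 →
    π2 ≫ ν1 = τ1 ≫ sw2 → π2 ≫ ν2 = τ2 ≫ sc2 →
    -- if the lower row is star-exact, then so is the upper row
    (IsStarKernel N d s1 s2 ∧ IsCoeqOf d s1 s2) →
    (IsStarKernel N lam π1 π2 ∧ IsCoeqOf lam π1 π2)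

/-!
Both conditions are compared with `StarPermutes`, the inclusion `Eq(g) Eq(f)* ≤ Eq(f) Eq(g)*` read
on generalised elements up to regular-epi covers, which in a regular category is equivalent to
2-star-permutability.

Given it, the upper row of a cuboid is star-exact. That `π` is the star-kernel of `λ` is a chase
through the universal properties of the stars; enough trivial objects, closed under products, let
one recognise an `N`-morphism into a star by its two components. To see that `λ` is a regular
epimorphism, lift an element `(y, a)` of `(Y ×_B A)*` along covers: `a = c e`, then `y = w x` with
`x ∈ N` by saturation of `w`, so `(δ x, g e) ∈ Eq(d)*`, which `ḡ` covers by some `(u, u') ∈ Eq(c)*`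
with `g u = δ x`, `g u' = g e`. Permuting `u Eq(c)* u' Eq(g) e` gives `u Eq(g)* m Eq(c) e`, and
then `(x, m) ∈ (W ×_D C)*` is sent by `λ` to `(y, a)`.

Conversely, for regular epimorphisms `φ, ψ` with domain `X`, apply the lemma to the cuboid with
trivial upper-left row on `X`, middle row `Eq(φ) ↠ R` onto the image `R` of `Eq(φ)` under `ψ`,
and lower row `Eq(ψ)* ⇉ X ↠ Z`: regularity of `λ : (X ×_X Eq(φ))* → (X ×_Z R)*` is exactly
`StarPermutes ψ φ`.
-/

def JointlyMono {T A B : 𝒞} (a : T ⟶ A) (b : T ⟶ B) : Prop :=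
  ∀ {Z : 𝒞} (u v : Z ⟶ T), u ≫ a = v ≫ a → u ≫ b = v ≫ b → u = v

lemma isRegEpi_iff_isRegularEpi {A B : 𝒞} (f : A ⟶ B) : IsRegEpi f ↔ IsRegularEpi f := by
  constructor
  · rintro ⟨Z, a, b, w, h⟩
    exact ⟨⟨⟨Z, a, b, w, Cofork.IsColimit.ofExistsUnique fun s => h s.π s.condition⟩⟩⟩
  · intro hf
    exact ⟨_, _, _, IsRegularEpi.w f, fun k hk =>
      ⟨_, IsRegularEpi.fac f k hk, fun m hm => IsRegularEpi.uniq f k hk m hm⟩⟩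

theorem regular_of_regEpisStable [HasFiniteLimits 𝒞] (hcoeq : KernelPairsHaveCoequalisers 𝒞)
    (hstab : RegEpisStable 𝒞) : Regular 𝒞 where
  hasCoequalizer_of_isKernelPair {_ _ _ f g₁ g₂} hk := by
    obtain ⟨Q, q, w, h⟩ := hcoeq f g₁ g₂ hk
    exact ⟨⟨⟨Cofork.ofπ q w, Cofork.IsColimit.ofExistsUnique fun s => h s.π s.condition⟩⟩⟩
  regularEpiIsStableUnderBaseChange := ⟨fun sq hg => by
    simp only [MorphismProperty.regularEpi, ← isRegEpi_iff_isRegularEpi] at hg ⊢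
    exact hstab _ _ _ _ sq.flip hg⟩

lemma IsRegEpi.epi {A B : 𝒞} {f : A ⟶ B} (hf : IsRegEpi f) : Epi f := by
  rw [isRegEpi_iff_isRegularEpi] at hf
  infer_instance

lemma IsRegEpi.of_section {A B : 𝒞} {r : A ⟶ B} (s : B ⟶ A) (hs : s ≫ r = 𝟙 B) :
    IsRegEpi r := by
  have : IsSplitEpi r := ⟨⟨⟨s, hs⟩⟩⟩
  exact (isRegEpi_iff_isRegularEpi r).2 inferInstance

lemma IsCoeqOf.isRegEpi {S A B : 𝒞} {f : A ⟶ B} {s1 s2 : S ⟶ A} (h : IsCoeqOf f s1 s2) :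
    IsRegEpi f :=
  ⟨S, s1, s2, h⟩

lemma IsRegEpi.exists_fill {A B K X₁ X₂ : 𝒞} {e : A ⟶ B} (he : IsRegEpi e)
    {k₁ : K ⟶ X₁} {k₂ : K ⟶ X₂} (hk : JointlyMono k₁ k₂) {u : A ⟶ K} {v₁ : B ⟶ X₁}
    {v₂ : B ⟶ X₂} (h₁ : u ≫ k₁ = e ≫ v₁) (h₂ : u ≫ k₂ = e ≫ v₂) :
    ∃ w : B ⟶ K, e ≫ w = u ∧ w ≫ k₁ = v₁ ∧ w ≫ k₂ = v₂ := by
  have := he.epi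
  obtain ⟨Z, a, b, hab, hdesc⟩ := he
  have hu : a ≫ u = b ≫ u :=
    hk _ _ (by simp only [Category.assoc, h₁, reassoc_of% hab])
      (by simp only [Category.assoc, h₂, reassoc_of% hab])
  obtain ⟨w, hw, -⟩ := hdesc u hu
  exact ⟨w, hw, (cancel_epi e).1 (by rw [reassoc_of% hw, h₁]),
    (cancel_epi e).1 (by rw [reassoc_of% hw, h₂])⟩

lemma Rel.le_of_cover {A B Q : 𝒞} {ρ σ : Rel 𝒞 A B} {e : Q ⟶ ρ.R} (he : IsRegEpi e)
    (k : Q ⟶ σ.R) (h₁ : k ≫ σ.p1 = e ≫ ρ.p1) (h₂ : k ≫ σ.p2 = e ≫ ρ.p2) : ρ.le σ :=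
  let ⟨w, _, hw₁, hw₂⟩ := he.exists_fill σ.jm h₁ h₂
  ⟨w, hw₁, hw₂⟩

lemma Rel.le_kerPairRel_iff [HasPullbacks 𝒞] {A B : 𝒞} {f : A ⟶ B} (σ : Rel 𝒞 A A) :
    σ.le (kerPairRel f) ↔ σ.p1 ≫ f = σ.p2 ≫ f := by
  constructor
  · rintro ⟨j, h₁, h₂⟩
    rw [← h₁, ← h₂, Category.assoc, Category.assoc]
    exact congrArg (j ≫ ·) (pullback.condition (f := f) (g := f))
  · intro h
    exact ⟨pullback.lift _ _ h, pullback.lift_fst _ _ _, pullback.lift_snd _ _ _⟩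

lemma kerPairRel_condition [HasPullbacks 𝒞] {A B : 𝒞} (f : A ⟶ B) :
    (kerPairRel f).p1 ≫ f = (kerPairRel f).p2 ≫ f :=
  pullback.condition

lemma kerPairRel_lift [HasPullbacks 𝒞] {A B T : 𝒞} {f : A ⟶ B} (z y : T ⟶ A)
    (h : z ≫ f = y ≫ f) :
    ∃ b : T ⟶ (kerPairRel f).R, b ≫ (kerPairRel f).p1 = z ∧ b ≫ (kerPairRel f).p2 = y :=
  ⟨pullback.lift z y h, pullback.lift_fst _ _ _, pullback.lift_snd _ _ _⟩

lemma IsRelComp.lift [HasPullbacks 𝒞] {A B C T : 𝒞} {σ : Rel 𝒞 B C} {ρ : Rel 𝒞 A B}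
    {τ : Rel 𝒞 A C} (h : IsRelComp σ ρ τ) (a : T ⟶ ρ.R) (b : T ⟶ σ.R)
    (hab : a ≫ ρ.p2 = b ≫ σ.p1) :
    ∃ t : T ⟶ τ.R, t ≫ τ.p1 = a ≫ ρ.p1 ∧ t ≫ τ.p2 = b ≫ σ.p2 := by
  obtain ⟨e, -, h₁, h₂⟩ := h
  exact ⟨pullback.lift a b hab ≫ e, by rw [Category.assoc, h₁, pullback.lift_fst_assoc],
    by rw [Category.assoc, h₂, pullback.lift_snd_assoc]⟩

lemma IsRelComp.lift_kerPairRel [HasPullbacks 𝒞] {A B C T : 𝒞} {f : B ⟶ C} {ρ τ : Rel 𝒞 A B}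
    (h : IsRelComp (kerPairRel f) ρ τ) (a : T ⟶ ρ.R) (y : T ⟶ B)
    (hy : a ≫ ρ.p2 ≫ f = y ≫ f) :
    ∃ t : T ⟶ τ.R, t ≫ τ.p1 = a ≫ ρ.p1 ∧ t ≫ τ.p2 = y := by
  obtain ⟨b, hb₁, hb₂⟩ := kerPairRel_lift (a ≫ ρ.p2) y (by rwa [Category.assoc])
  obtain ⟨t, ht₁, ht₂⟩ := h.lift a b hb₁.symm
  exact ⟨t, ht₁, ht₂.trans hb₂⟩

section Regular

variable [Regular 𝒞]

lemma IsRegEpi.comp {A B C : 𝒞} {f : A ⟶ B} {g : B ⟶ C} (hf : IsRegEpi f)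
    (hg : IsRegEpi g) : IsRegEpi (f ≫ g) := by
  rw [isRegEpi_iff_isRegularEpi] at *
  infer_instance

lemma IsRegEpi.of_comp {A B C : 𝒞} {f : A ⟶ B} {g : B ⟶ C} (h : IsRegEpi (f ≫ g)) :
    IsRegEpi g := by
  rw [isRegEpi_iff_isRegularEpi] at *
  have := strongEpi_of_strongEpi f g
  infer_instance

lemma IsRegEpi.exists_cover_lift {A B T : 𝒞} {c : A ⟶ B} (hc : IsRegEpi c) (b : T ⟶ B) :
    ∃ (T' : 𝒞) (q : T' ⟶ T) (a : T' ⟶ A), IsRegEpi q ∧ q ≫ b = a ≫ c := by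
  rw [isRegEpi_iff_isRegularEpi] at hc
  exact ⟨_, pullback.fst b c, pullback.snd b c, (isRegEpi_iff_isRegularEpi _).2 inferInstance,
    pullback.condition⟩

lemma exists_isRegEpi_mono_fac {A B : 𝒞} (f : A ⟶ B) :
    ∃ (I : 𝒞) (e : A ⟶ I) (m : I ⟶ B), IsRegEpi e ∧ Mono m ∧ e ≫ m = f :=
  let F := Regular.strongEpiMonoFactorisation f
  ⟨F.I, F.e, F.m, (isRegEpi_iff_isRegularEpi _).2 inferInstance, F.m_mono, F.fac⟩

lemma Rel.exists_image {A B T : 𝒞} (a : T ⟶ A) (b : T ⟶ B) :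
    ∃ (τ : Rel 𝒞 A B) (e : T ⟶ τ.R), IsRegEpi e ∧ e ≫ τ.p1 = a ∧ e ≫ τ.p2 = b := by
  obtain ⟨I, e, m, he, hm, hem⟩ := exists_isRegEpi_mono_fac (prod.lift a b)
  refine ⟨⟨I, m ≫ prod.fst, m ≫ prod.snd, fun u v h₁ h₂ => ?_⟩, e, he,
    by rw [reassoc_of% hem, prod.lift_fst], by rw [reassoc_of% hem, prod.lift_snd]⟩
  exact (cancel_mono m).1 (prod.hom_ext (by simpa using h₁) (by simpa using h₂))

lemma exists_isRelComp {A B C : 𝒞} (σ : Rel 𝒞 B C) (ρ : Rel 𝒞 A B) :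
    ∃ τ : Rel 𝒞 A C, IsRelComp σ ρ τ :=
  let ⟨τ, e, he, h₁, h₂⟩ :=
    Rel.exists_image (pullback.fst ρ.p2 σ.p1 ≫ ρ.p1) (pullback.snd ρ.p2 σ.p1 ≫ σ.p2)
  ⟨τ, e, he, h₁, h₂⟩

lemma IsRelComp.exists_cover {A B C T : 𝒞} {σ : Rel 𝒞 B C} {ρ : Rel 𝒞 A B} {τ : Rel 𝒞 A C}
    (h : IsRelComp σ ρ τ) (t : T ⟶ τ.R) :
    ∃ (T' : 𝒞) (q : T' ⟶ T) (a : T' ⟶ ρ.R) (b : T' ⟶ σ.R), IsRegEpi q ∧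
      a ≫ ρ.p2 = b ≫ σ.p1 ∧ a ≫ ρ.p1 = q ≫ t ≫ τ.p1 ∧ b ≫ σ.p2 = q ≫ t ≫ τ.p2 := by
  obtain ⟨e, he, h₁, h₂⟩ := h
  obtain ⟨T', q, p, hq, hp⟩ := he.exists_cover_lift t
  refine ⟨T', q, p ≫ pullback.fst _ _, p ≫ pullback.snd _ _, hq, by simp [pullback.condition],
    ?_, ?_⟩
  · rw [reassoc_of% hp, h₁, Category.assoc]
  · rw [reassoc_of% hp, h₂, Category.assoc]

lemma IsRelComp.exists_cover_kerPairRel {A B C T : 𝒞} {f : B ⟶ C} {ρ τ : Rel 𝒞 A B}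
    (h : IsRelComp (kerPairRel f) ρ τ) (t : T ⟶ τ.R) :
    ∃ (T' : 𝒞) (q : T' ⟶ T) (a : T' ⟶ ρ.R), IsRegEpi q ∧
      a ≫ ρ.p1 = q ≫ t ≫ τ.p1 ∧ a ≫ ρ.p2 ≫ f = q ≫ t ≫ τ.p2 ≫ f := by
  obtain ⟨T', q, a, b, hq, hab, ha, hb⟩ := h.exists_cover t
  refine ⟨T', q, a, hq, ha, ?_⟩
  rw [reassoc_of% hab, kerPairRel_condition, reassoc_of% hb]

end Regular

section Star

variable {N : MorphismProperty 𝒞}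

lemma mem_of_nTrivial (hN : IsIdeal N) {S A : 𝒞} (hS : NTrivial N S) (f : S ⟶ A) : N f := by
  simpa using hN (𝟙 S) f (Or.inl hS)

lemma IsStarPullbackRel.exists_lift {W E D P T : 𝒞} {δ : W ⟶ D} {g : E ⟶ D} {ν1 : P ⟶ W}
    {ν2 : P ⟶ E} (h : IsStarPullbackRel N δ g ν1 ν2) (t1 : T ⟶ W) (t2 : T ⟶ E) (ht : N t1)
    (h12 : t1 ≫ δ = t2 ≫ g) : ∃ u : T ⟶ P, u ≫ ν1 = t1 ∧ u ≫ ν2 = t2 :=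
  (h.2.2 t1 t2 ht h12).exists

lemma IsStarPullbackRel.jointlyMono (hN : IsIdeal N) {W E D P : 𝒞} {δ : W ⟶ D} {g : E ⟶ D}
    {ν1 : P ⟶ W} {ν2 : P ⟶ E} (h : IsStarPullbackRel N δ g ν1 ν2) : JointlyMono ν1 ν2 := by
  intro T a b h1 h2
  obtain ⟨u, -, hu⟩ := h.2.2 (a ≫ ν1) (a ≫ ν2) (hN a ν1 (Or.inr h.1)) (by simp [h.2.1])
  exact (hu a ⟨rfl, rfl⟩).trans (hu b ⟨h1.symm, h2.symm⟩).symm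

lemma IsStarPullbackRel.of_exists_lift {W E D P : 𝒞} {δ : W ⟶ D} {g : E ⟶ D} {ν1 : P ⟶ W}
    {ν2 : P ⟶ E} (h1 : N ν1) (h2 : ν1 ≫ δ = ν2 ≫ g) (hjm : JointlyMono ν1 ν2)
    (hex : ∀ {T : 𝒞} (t1 : T ⟶ W) (t2 : T ⟶ E), N t1 → t1 ≫ δ = t2 ≫ g →
      ∃ u : T ⟶ P, u ≫ ν1 = t1 ∧ u ≫ ν2 = t2) :
    IsStarPullbackRel N δ g ν1 ν2 :=
  ⟨h1, h2, fun t1 t2 ht h12 =>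
    let ⟨u, hu⟩ := hex t1 t2 ht h12
    ⟨u, hu, fun _ hv => hjm _ _ (hv.1.trans hu.1.symm) (hv.2.trans hu.2.symm)⟩⟩

lemma exists_isStarPullbackRel [HasPullbacks 𝒞] (hker : HasNKernels N) {W E D : 𝒞}
    (δ : W ⟶ D) (g : E ⟶ D) :
    ∃ (P : 𝒞) (ν1 : P ⟶ W) (ν2 : P ⟶ E), IsStarPullbackRel N δ g ν1 ν2 := by
  obtain ⟨K, n, hn, hlift⟩ := hker (pullback.fst δ g)
  refine ⟨K, n ≫ pullback.fst δ g, n ≫ pullback.snd δ g, hn,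
    by simp [pullback.condition], fun t1 t2 ht h12 => ?_⟩
  obtain ⟨u, hu, huniq⟩ := hlift (pullback.lift t1 t2 h12) (by rwa [pullback.lift_fst])
  refine ⟨u, by simp [reassoc_of% hu, pullback.lift_fst, pullback.lift_snd], fun v hv => ?_⟩
  exact huniq v (pullback.hom_ext (by simpa [pullback.lift_fst] using hv.1)
    (by simpa [pullback.lift_snd] using hv.2))

-- `IsStarKernel N f` unfolds to `IsStarPullbackRel N f f`, so the lemmas on the latter apply.
lemma exists_isStarKernel [HasPullbacks 𝒞] (hker : HasNKernels N) {A B : 𝒞} (f : A ⟶ B) :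
    ∃ (S : 𝒞) (s1 s2 : S ⟶ A), IsStarKernel N f s1 s2 :=
  exists_isStarPullbackRel hker f f

lemma IsStarKernel.isCoeqOf (hsr : StarRegular 𝒞 N) {S A B : 𝒞} {f : A ⟶ B}
    {s1 s2 : S ⟶ A} (hs : IsStarKernel N f s1 s2) (hf : IsRegEpi f) : IsCoeqOf f s1 s2 := by
  obtain ⟨S', t1, t2, ht, hcoeq⟩ := hsr f hf
  obtain ⟨u, hu1, hu2⟩ := IsStarPullbackRel.exists_lift hs t1 t2 ht hcoeq.1
  exact ⟨hs.2.1, fun h hh => hcoeq.2 h (by rw [← hu1, ← hu2, Category.assoc, hh,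
    Category.assoc])⟩

lemma isLargestStarSub_kerPairRel_iff [HasPullbacks 𝒞] (hN : IsIdeal N) (hker : HasNKernels N)
    {A B : 𝒞} {f : A ⟶ B} (ρ : Rel 𝒞 A A) :
    IsLargestStarSub N (kerPairRel f) ρ ↔ IsStarKernel N f ρ.p1 ρ.p2 := by
  constructor
  · rintro ⟨hρ, hρN, hmax⟩
    obtain ⟨S, s1, s2, hs⟩ := exists_isStarKernel hker f
    obtain ⟨j, hj1, hj2⟩ := hmax ⟨S, s1, s2, IsStarPullbackRel.jointlyMono hN hs⟩
      ((Rel.le_kerPairRel_iff _).2 hs.2.1) hs.1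
    refine IsStarPullbackRel.of_exists_lift hρN ((Rel.le_kerPairRel_iff ρ).1 hρ) ρ.jm
      fun t1 t2 ht h12 => ?_
    obtain ⟨u, hu1, hu2⟩ := IsStarPullbackRel.exists_lift hs t1 t2 ht h12
    exact ⟨u ≫ j, by rw [Category.assoc, hj1, hu1], by rw [Category.assoc, hj2, hu2]⟩
  · intro hs
    refine ⟨(Rel.le_kerPairRel_iff ρ).2 hs.2.1, hs.1, fun σ hσ hσN => ?_⟩
    obtain ⟨u, hu1, hu2⟩ :=
      IsStarPullbackRel.exists_lift hs σ.p1 σ.p2 hσN ((Rel.le_kerPairRel_iff σ).1 hσ)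
    exact ⟨u, hu1, hu2⟩

section Regular

variable [Regular 𝒞]

lemma exists_nTrivial_cover (htriv : EnoughTrivialObjects N)
    (hprod : ∀ X Y : 𝒞, NTrivial N X → NTrivial N Y → NTrivial N (X ⨯ Y))
    {T A B : 𝒞} {x1 : T ⟶ A} {x2 : T ⟶ B} (h1 : N x1) (h2 : N x2) :
    ∃ (S : 𝒞) (e : T ⟶ S) (y1 : S ⟶ A) (y2 : S ⟶ B),
      NTrivial N S ∧ IsRegEpi e ∧ e ≫ y1 = x1 ∧ e ≫ y2 = x2 := by
  obtain ⟨T1, p1, q1, hT1, hpq1⟩ := htriv.1 x1 h1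
  obtain ⟨T2, p2, q2, hT2, hpq2⟩ := htriv.1 x2 h2
  obtain ⟨S, e, m, he, hm, hem⟩ := exists_isRegEpi_mono_fac (prod.lift p1 p2)
  refine ⟨S, e, m ≫ prod.fst ≫ q1, m ≫ prod.snd ≫ q2, htriv.2.1 m hm (hprod _ _ hT1 hT2), he,
    ?_, ?_⟩
  · rw [reassoc_of% hem, prod.lift_fst_assoc, hpq1]
  · rw [reassoc_of% hem, prod.lift_snd_assoc, hpq2]

lemma IsStarPullbackRel.mem_of_mem_comp (hN : IsIdeal N) (htriv : EnoughTrivialObjects N)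
    (hprod : ∀ X Y : 𝒞, NTrivial N X → NTrivial N Y → NTrivial N (X ⨯ Y))
    {W E D P T : 𝒞} {δ : W ⟶ D} {g : E ⟶ D} {ν1 : P ⟶ W} {ν2 : P ⟶ E}
    (h : IsStarPullbackRel N δ g ν1 ν2) {α : T ⟶ P} (h1 : N (α ≫ ν1)) (h2 : N (α ≫ ν2)) :
    N α := by
  obtain ⟨S, e, y1, y2, hS, he, hy1, hy2⟩ := exists_nTrivial_cover htriv hprod h1 h2
  have := he.epi
  obtain ⟨α', h1', h2'⟩ := h.exists_lift y1 y2 (mem_of_nTrivial hN hS y1)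
    ((cancel_epi e).1 (by rw [reassoc_of% hy1, reassoc_of% hy2, h.2.1]))
  have hα : e ≫ α' = α :=
    h.jointlyMono hN _ _ (by rw [Category.assoc, h1', hy1]) (by rw [Category.assoc, h2', hy2])
  exact hα ▸ hN e α' (Or.inr (mem_of_nTrivial hN hS α'))

/-- `Eq(g) Eq(f)* ≤ Eq(f) Eq(g)*` read on generalised elements, up to a regular-epi cover:
if `x Eq(f)* z Eq(g) y`, then `x Eq(g)* m Eq(f) y` for some `m` defined on a cover. -/
def StarPermutes (N : MorphismProperty 𝒞) {A B C : 𝒞} (f : A ⟶ B) (g : A ⟶ C) : Prop :=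
  ∀ ⦃T : 𝒞⦄ (x z y : T ⟶ A), N x → x ≫ f = z ≫ f → z ≫ g = y ≫ g →
    ∃ (T' : 𝒞) (q : T' ⟶ T) (m : T' ⟶ A), IsRegEpi q ∧ q ≫ x ≫ g = m ≫ g ∧
      m ≫ f = q ≫ y ≫ f

lemma le_of_starPermutes (hN : IsIdeal N) {A B C : 𝒞} {f : A ⟶ B} {g : A ⟶ C}
    {sf sg τ₁ τ₂ : Rel 𝒞 A A} (hsf : IsStarKernel N f sf.p1 sf.p2)
    (hsg : IsStarKernel N g sg.p1 sg.p2) (h₁ : IsRelComp (kerPairRel f) sg τ₁)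
    (h₂ : IsRelComp (kerPairRel g) sf τ₂) (hfg : StarPermutes N f g) : τ₂.le τ₁ := by
  -- a cover of the generic element `𝟙` of `τ₂`
  obtain ⟨T, q, a, hq, ha₁, ha₂⟩ := h₂.exists_cover_kerPairRel (𝟙 τ₂.R)
  obtain ⟨T', q', m, hq', hxm, hmy⟩ := hfg (a ≫ sf.p1) (a ≫ sf.p2) (q ≫ τ₂.p2)
    (hN _ _ (Or.inr hsf.1)) (by rw [Category.assoc, Category.assoc, hsf.2.1])
    (by simpa using ha₂)
  obtain ⟨a', ha'₁, ha'₂⟩ := IsStarPullbackRel.exists_lift hsg (q' ≫ a ≫ sf.p1) m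
    (hN _ _ (Or.inr (hN _ _ (Or.inr hsf.1)))) (by simpa only [Category.assoc] using hxm)
  obtain ⟨t, ht₁, ht₂⟩ := h₁.lift_kerPairRel a' (q' ≫ q ≫ τ₂.p2)
    (by rw [reassoc_of% ha'₂, hmy]; simp only [Category.assoc])
  refine Rel.le_of_cover (hq'.comp hq) t ?_ ?_
  · rw [ht₁, ha'₁, ha₁, Category.id_comp, Category.assoc]
  · rw [ht₂, Category.assoc]

lemma starPermutes_of_le {A B C : 𝒞} {f : A ⟶ B} {g : A ⟶ C} {sf sg τ₁ τ₂ : Rel 𝒞 A A}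
    (hsf : IsStarKernel N f sf.p1 sf.p2) (hsg : IsStarKernel N g sg.p1 sg.p2)
    (h₁ : IsRelComp (kerPairRel f) sg τ₁) (h₂ : IsRelComp (kerPairRel g) sf τ₂)
    (hle : τ₂.le τ₁) : StarPermutes N f g := by
  intro T x z y hx hxz hzy
  obtain ⟨a, ha₁, ha₂⟩ := IsStarPullbackRel.exists_lift hsf x z hx hxz
  obtain ⟨t, ht₁, ht₂⟩ := h₂.lift_kerPairRel a y (by rw [reassoc_of% ha₂, hzy])
  obtain ⟨j, hj₁, hj₂⟩ := hle
  obtain ⟨T', q, a', hq, ha'₁, ha'₂⟩ := h₁.exists_cover_kerPairRel (t ≫ j)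
  refine ⟨T', q, a' ≫ sg.p2, hq, ?_, ?_⟩
  · rw [Category.assoc, ← hsg.2.1, reassoc_of% ha'₁]
    simp only [reassoc_of% hj₁, reassoc_of% ht₁, reassoc_of% ha₁]
  · rw [Category.assoc, ha'₂]
    simp only [Category.assoc, reassoc_of% hj₂, reassoc_of% ht₂]

theorem twoStarPermutable_iff_starPermutes (hN : IsIdeal N) (hker : HasNKernels N) :
    TwoStarPermutable 𝒞 N ↔ ∀ {A B C : 𝒞} (f : A ⟶ B) (g : A ⟶ C),
      IsRegEpi f → IsRegEpi g → StarPermutes N f g := by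
  constructor
  · intro h A B C f g hf hg
    obtain ⟨Sf, sf1, sf2, hsf⟩ := exists_isStarKernel hker f
    obtain ⟨Sg, sg1, sg2, hsg⟩ := exists_isStarKernel hker g
    let sf : Rel 𝒞 A A := ⟨Sf, sf1, sf2, IsStarPullbackRel.jointlyMono hN hsf⟩
    let sg : Rel 𝒞 A A := ⟨Sg, sg1, sg2, IsStarPullbackRel.jointlyMono hN hsg⟩
    obtain ⟨τ₁, h₁⟩ := exists_isRelComp (kerPairRel f) sg
    obtain ⟨τ₂, h₂⟩ := exists_isRelComp (kerPairRel g) sf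
    exact starPermutes_of_le hsf hsg h₁ h₂ (h f g hf hg sf sg
      ((isLargestStarSub_kerPairRel_iff hN hker sf).2 hsf)
      ((isLargestStarSub_kerPairRel_iff hN hker sg).2 hsg) τ₁ τ₂ h₁ h₂).2
  · intro h A B C f g hf hg sf sg hsf hsg τ₁ τ₂ h₁ h₂
    rw [isLargestStarSub_kerPairRel_iff hN hker] at hsf hsg
    exact ⟨le_of_starPermutes hN hsg hsf h₂ h₁ (h g f hg hf),
      le_of_starPermutes hN hsf hsg h₁ h₂ (h f g hf hg)⟩

end Regular

end Star

section Forward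

variable {N : MorphismProperty 𝒞} [Regular 𝒞]

lemma Saturating.exists_cover_lift (hN : IsIdeal N) (hker : HasNKernels N) {W Y T : 𝒞}
    {w : W ⟶ Y} (hw : Saturating N w) (h : T ⟶ Y) (hh : N h) :
    ∃ (T' : 𝒞) (e : T' ⟶ T) (x : T' ⟶ W), IsRegEpi e ∧ N x ∧ x ≫ w = e ≫ h := by
  obtain ⟨KY, nY, hnY⟩ := hker (𝟙 Y)
  obtain ⟨KW, nW, hnW⟩ := hker (𝟙 W)
  have hnW' : N nW := by simpa using hnW.1
  -- `h` factors through the `N`-kernel of `𝟙 Y`, which that of `𝟙 W` covers by saturation.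
  obtain ⟨h', hh', -⟩ := hnY.2 h (by simpa using hh)
  obtain ⟨u, hu, -⟩ := hnY.2 (nW ≫ w) (by simpa using hN nW w (Or.inl hnW'))
  obtain ⟨T', e, k, he, hk⟩ := (hw nW nY hnW hnY u hu).exists_cover_lift h'
  refine ⟨T', e, k ≫ nW, he, hN _ _ (Or.inr hnW'), ?_⟩
  rw [Category.assoc, ← hu, ← Category.assoc, ← hk, Category.assoc, hh']

lemma isStarKernel_of_cuboid (hN : IsIdeal N) (htriv : EnoughTrivialObjects N)
    (hprod : ∀ X Y : 𝒞, NTrivial N X → NTrivial N Y → NTrivial N (X ⨯ Y))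
    {W Y E A D SW SC S V U P : 𝒞}
    {w : W ⟶ Y} {c : E ⟶ A} {g : E ⟶ D} {δ : W ⟶ D}
    {sw1 sw2 : SW ⟶ W} {sc1 sc2 : SC ⟶ E} {s1 s2 : S ⟶ D} {gbar : SC ⟶ S} {δbar : SW ⟶ S}
    {ν1 : V ⟶ W} {ν2 : V ⟶ E} {χ1 : U ⟶ Y} {χ2 : U ⟶ A}
    {τ1 : P ⟶ SW} {τ2 : P ⟶ SC} {lam : V ⟶ U} {π1 π2 : P ⟶ V}
    (hsw : IsStarKernel N w sw1 sw2) (hsc : IsStarKernel N c sc1 sc2) (hs : JointlyMono s1 s2)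
    (hgb1 : gbar ≫ s1 = sc1 ≫ g) (hgb2 : gbar ≫ s2 = sc2 ≫ g)
    (hdb1 : δbar ≫ s1 = sw1 ≫ δ) (hdb2 : δbar ≫ s2 = sw2 ≫ δ)
    (hV : IsStarPullbackRel N δ g ν1 ν2) (hχ : JointlyMono χ1 χ2)
    (hP : IsStarPullbackRel N δbar gbar τ1 τ2)
    (hl1 : lam ≫ χ1 = ν1 ≫ w) (hl2 : lam ≫ χ2 = ν2 ≫ c)
    (hp11 : π1 ≫ ν1 = τ1 ≫ sw1) (hp12 : π1 ≫ ν2 = τ2 ≫ sc1)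
    (hp21 : π2 ≫ ν1 = τ1 ≫ sw2) (hp22 : π2 ≫ ν2 = τ2 ≫ sc2) :
    IsStarKernel N lam π1 π2 := by
  have hν : JointlyMono ν1 ν2 := hV.jointlyMono hN
  have hsw' : JointlyMono sw1 sw2 := IsStarPullbackRel.jointlyMono hN hsw
  have hsc' : JointlyMono sc1 sc2 := IsStarPullbackRel.jointlyMono hN hsc
  refine IsStarPullbackRel.of_exists_lift ?_ ?_ ?_ ?_
  · refine hV.mem_of_mem_comp hN htriv hprod ?_ ?_
    · rw [hp11]; exact hN _ _ (Or.inr hsw.1)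
    · rw [hp12]; exact hN _ _ (Or.inr hsc.1)
  · refine hχ _ _ ?_ ?_
    · simp only [Category.assoc, hl1, reassoc_of% hp11, reassoc_of% hp21, hsw.2.1]
    · simp only [Category.assoc, hl2, reassoc_of% hp12, reassoc_of% hp22, hsc.2.1]
  · intro T a b h1 h2
    refine hP.jointlyMono hN _ _ (hsw' _ _ ?_ ?_) (hsc' _ _ ?_ ?_)
    · simp only [Category.assoc, ← hp11, reassoc_of% h1]
    · simp only [Category.assoc, ← hp21, reassoc_of% h2]
    · simp only [Category.assoc, ← hp12, reassoc_of% h1]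
    · simp only [Category.assoc, ← hp22, reassoc_of% h2]
  · intro T t1 t2 ht1 h12
    obtain ⟨α, hα1, hα2⟩ := IsStarPullbackRel.exists_lift hsw (t1 ≫ ν1) (t2 ≫ ν1)
      (hN _ _ (Or.inl ht1)) (by rw [Category.assoc, Category.assoc, ← hl1, reassoc_of% h12])
    obtain ⟨γ, hγ1, hγ2⟩ := IsStarPullbackRel.exists_lift hsc (t1 ≫ ν2) (t2 ≫ ν2)
      (hN _ _ (Or.inl ht1)) (by rw [Category.assoc, Category.assoc, ← hl2, reassoc_of% h12])
    have hα : N α := by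
      refine IsStarPullbackRel.mem_of_mem_comp hN htriv hprod hsw ?_ ?_
      · rw [hα1]; exact hN _ _ (Or.inl ht1)
      · rw [hα2]; exact hN _ _ (Or.inr hV.1)
    have hαγ : α ≫ δbar = γ ≫ gbar := hs _ _
      (by simp only [Category.assoc, hdb1, hgb1, reassoc_of% hα1, reassoc_of% hγ1, hV.2.1])
      (by simp only [Category.assoc, hdb2, hgb2, reassoc_of% hα2, reassoc_of% hγ2, hV.2.1])
    obtain ⟨u, hu1, hu2⟩ := hP.exists_lift α γ hα hαγ
    refine ⟨u, hν _ _ ?_ ?_, hν _ _ ?_ ?_⟩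
    · rw [Category.assoc, hp11, reassoc_of% hu1, hα1]
    · rw [Category.assoc, hp12, reassoc_of% hu2, hγ1]
    · rw [Category.assoc, hp21, reassoc_of% hu1, hα2]
    · rw [Category.assoc, hp22, reassoc_of% hu2, hγ2]

lemma isRegEpi_of_cuboid (hN : IsIdeal N) (hker : HasNKernels N)
    {W Y E A D B SC S V U : 𝒞}
    {w : W ⟶ Y} {c : E ⟶ A} {d : D ⟶ B} {g : E ⟶ D} {f : A ⟶ B} {δ : W ⟶ D} {β : Y ⟶ B}
    {sc1 sc2 : SC ⟶ E} {s1 s2 : S ⟶ D} {gbar : SC ⟶ S}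
    {ν1 : V ⟶ W} {ν2 : V ⟶ E} {χ1 : U ⟶ Y} {χ2 : U ⟶ A} {lam : V ⟶ U}
    (hw : Saturating N w) (hc : IsRegEpi c) (hgbar : IsRegEpi gbar) (hcg : StarPermutes N c g)
    (hcf : c ≫ f = g ≫ d) (hwβ : w ≫ β = δ ≫ d)
    (hsc : IsStarKernel N c sc1 sc2) (hs : IsStarKernel N d s1 s2)
    (hgb1 : gbar ≫ s1 = sc1 ≫ g) (hgb2 : gbar ≫ s2 = sc2 ≫ g)
    (hV : IsStarPullbackRel N δ g ν1 ν2) (hU : IsStarPullbackRel N β f χ1 χ2)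
    (hl1 : lam ≫ χ1 = ν1 ≫ w) (hl2 : lam ≫ χ2 = ν2 ≫ c) : IsRegEpi lam := by
  obtain ⟨Q₁, q₁, e, hq₁, he⟩ := hc.exists_cover_lift χ2
  obtain ⟨Q₂, q₂, x, hq₂, hx, hxw⟩ :=
    hw.exists_cover_lift hN hker (q₁ ≫ χ1) (hN _ _ (Or.inr hU.1))
  obtain ⟨σ, hσ1, hσ2⟩ := IsStarPullbackRel.exists_lift hs (x ≫ δ) (q₂ ≫ e ≫ g)
    (hN _ _ (Or.inl hx)) (by
      simp only [Category.assoc, ← hwβ, reassoc_of% hxw, hU.2.1, reassoc_of% he, hcf])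
  obtain ⟨Q₃, q₃, ψ, hq₃, hψ⟩ := hgbar.exists_cover_lift σ
  obtain ⟨Q₄, q₄, m, hq₄, hmg, hmc⟩ := hcg (ψ ≫ sc1) (ψ ≫ sc2) (q₃ ≫ q₂ ≫ e)
    (hN _ _ (Or.inr hsc.1)) (by rw [Category.assoc, Category.assoc, hsc.2.1])
    (by simp only [Category.assoc, ← hgb2, ← reassoc_of% hψ, hσ2])
  obtain ⟨ζ, hζ1, hζ2⟩ := hV.exists_lift (q₄ ≫ q₃ ≫ x) m
    (hN _ _ (Or.inr (hN _ _ (Or.inr hx))))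
    (by rw [← hmg]; simp only [Category.assoc, ← hσ1, reassoc_of% hψ, hgb1])
  have hζ : ζ ≫ lam = q₄ ≫ q₃ ≫ q₂ ≫ q₁ := by
    refine hU.jointlyMono hN _ _ ?_ ?_
    · simp only [Category.assoc, hl1, reassoc_of% hζ1, hxw]
    · simp only [Category.assoc, hl2, reassoc_of% hζ2, hmc, he]
  exact IsRegEpi.of_comp (f := ζ) (hζ ▸ hq₄.comp (hq₃.comp (hq₂.comp hq₁)))

theorem starUpperCuboidLemma_of_starPermutes (hN : IsIdeal N) (hker : HasNKernels N)
    (hsr : StarRegular 𝒞 N) (hsat : ∀ {X Y : 𝒞} (f : X ⟶ Y), IsRegEpi f → Saturating N f)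
    (htriv : EnoughTrivialObjects N)
    (hprod : ∀ X Y : 𝒞, NTrivial N X → NTrivial N Y → NTrivial N (X ⨯ Y))
    (hperm : ∀ {A B C : 𝒞} (f : A ⟶ B) (g : A ⟶ C),
      IsRegEpi f → IsRegEpi g → StarPermutes N f g) :
    StarUpperCuboidLemma 𝒞 N := by
  rintro W Y E A D B SW SC S V U P w c d g f δ β sw1 sw2 sc1 sc2 s1 s2 gbar δbar ν1 ν2 χ1 χ2
    τ1 τ2 lam π1 π2 hg _ hgbar hcf hwβ _ hsw hw_coeq hsc hc_coeq hgb1 hgb2 hdb1 hdb2 hV hU hP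
    hl1 hl2 hp11 hp12 hp21 hp22 ⟨hs, -⟩
  have hlam : IsStarKernel N lam π1 π2 :=
    isStarKernel_of_cuboid hN htriv hprod hsw hsc (IsStarPullbackRel.jointlyMono hN hs)
      hgb1 hgb2 hdb1 hdb2 hV (hU.jointlyMono hN) hP hl1 hl2 hp11 hp12 hp21 hp22
  have hc : IsRegEpi c := hc_coeq.isRegEpi
  exact ⟨hlam, hlam.isCoeqOf hsr (isRegEpi_of_cuboid hN hker (hsat w hw_coeq.isRegEpi) hc
    hgbar (hperm c g hc hg) hcf hwβ hsc hs hgb1 hgb2 hV hU hl1 hl2)⟩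

end Forward

section Backward

variable {N : MorphismProperty 𝒞}

lemma isRegEpi_of_isStarKernel_of_section (hN : IsIdeal N) {E D A B SC S : 𝒞} {g : E ⟶ D}
    {t : D ⟶ E} (ht : t ≫ g = 𝟙 D) {c : E ⟶ A} {d : D ⟶ B} {r : B ⟶ A}
    (htc : t ≫ c = d ≫ r) {sc1 sc2 : SC ⟶ E} {s1 s2 : S ⟶ D}
    (hsc : IsStarKernel N c sc1 sc2) (hs : IsStarKernel N d s1 s2) {gbar : SC ⟶ S}
    (hgb1 : gbar ≫ s1 = sc1 ≫ g) (hgb2 : gbar ≫ s2 = sc2 ≫ g) : IsRegEpi gbar := by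
  obtain ⟨k, hk1, hk2⟩ := IsStarPullbackRel.exists_lift hsc (s1 ≫ t) (s2 ≫ t)
    (hN _ _ (Or.inl hs.1)) (by simp only [Category.assoc, htc, reassoc_of% hs.2.1])
  refine IsRegEpi.of_section k (IsStarPullbackRel.jointlyMono hN hs _ _ ?_ ?_)
  · rw [Category.assoc, hgb1, reassoc_of% hk1, ht, Category.comp_id, Category.id_comp]
  · rw [Category.assoc, hgb2, reassoc_of% hk2, ht, Category.comp_id, Category.id_comp]

variable [Regular 𝒞]

lemma isRegEpi_of_starUpperCuboidLemma (hN : IsIdeal N) (hker : HasNKernels N)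
    (hsr : StarRegular 𝒞 N) (hcub : StarUpperCuboidLemma 𝒞 N) {X Y Z : 𝒞} {φ : X ⟶ Y}
    {ψ : X ⟶ Z} (hψ : IsRegEpi ψ) {R : Rel 𝒞 Z Z} {e : pullback φ φ ⟶ R.R} (he : IsRegEpi e)
    (he1 : e ≫ R.p1 = pullback.fst φ φ ≫ ψ) (he2 : e ≫ R.p2 = pullback.snd φ φ ≫ ψ)
    {V U : 𝒞} {ν1 : V ⟶ X} {ν2 : V ⟶ pullback φ φ} {χ1 : U ⟶ X} {χ2 : U ⟶ R.R}
    (hV : IsStarPullbackRel N (𝟙 X) (pullback.fst φ φ) ν1 ν2)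
    (hU : IsStarPullbackRel N ψ R.p1 χ1 χ2) {lam : V ⟶ U} (hl1 : lam ≫ χ1 = ν1)
    (hl2 : lam ≫ χ2 = ν2 ≫ e) : IsRegEpi lam := by
  let diag : X ⟶ pullback φ φ := pullback.lift (𝟙 X) (𝟙 X) rfl
  have hdiag : diag ≫ pullback.fst φ φ = 𝟙 X := pullback.lift_fst _ _ _
  obtain ⟨r, hr, hr1, -⟩ := hψ.exists_fill R.jm (u := diag ≫ e) (v₁ := 𝟙 Z) (v₂ := 𝟙 Z)
    (by rw [Category.assoc, he1, reassoc_of% hdiag, Category.comp_id])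
    (by rw [Category.assoc, he2, pullback.lift_snd_assoc, Category.id_comp, Category.comp_id])
  obtain ⟨S, s1, s2, hs⟩ := exists_isStarKernel hker ψ
  obtain ⟨SC, sc1, sc2, hsc⟩ := exists_isStarKernel hker e
  obtain ⟨K, k, k', hk⟩ := exists_isStarKernel hker (𝟙 X)
  obtain rfl : k = k' := by simpa using hk.2.1
  obtain ⟨gbar, hgb1, hgb2⟩ := IsStarPullbackRel.exists_lift hs (sc1 ≫ pullback.fst φ φ)
    (sc2 ≫ pullback.fst φ φ) (hN _ _ (Or.inl hsc.1))
    (by simp only [Category.assoc, ← he1, reassoc_of% hsc.2.1])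
  obtain ⟨δbar, hdb1, hdb2⟩ := IsStarPullbackRel.exists_lift hs k k hk.1 rfl
  obtain ⟨P, τ1, τ2, hP⟩ := exists_isStarPullbackRel hker δbar gbar
  obtain ⟨π1, hp11, hp12⟩ := hV.exists_lift (τ1 ≫ k) (τ2 ≫ sc1) (hN _ _ (Or.inr hk.1))
    (by rw [Category.comp_id, ← hdb1, reassoc_of% hP.2.1, hgb1, Category.assoc])
  obtain ⟨π2, hp21, hp22⟩ := hV.exists_lift (τ1 ≫ k) (τ2 ≫ sc2) (hN _ _ (Or.inr hk.1))
    (by rw [Category.comp_id, ← hdb2, reassoc_of% hP.2.1, hgb2, Category.assoc])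
  have hgbar : IsRegEpi gbar :=
    isRegEpi_of_isStarKernel_of_section hN hdiag hr.symm hsc hs hgb1 hgb2
  have hid : IsRegEpi (𝟙 X) := IsRegEpi.of_section (𝟙 X) (Category.id_comp _)
  exact (hcub (𝟙 X) e ψ (pullback.fst φ φ) R.p1 (𝟙 X) ψ k k sc1 sc2 s1 s2 gbar δbar
    ν1 ν2 χ1 χ2 τ1 τ2 lam π1 π2 (IsRegEpi.of_section diag hdiag) (IsRegEpi.of_section r hr1)
    hgbar he1 rfl hs.1 hk (hk.isCoeqOf hsr hid) hsc (hsc.isCoeqOf hsr he) hgb1 hgb2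
    (by rw [hdb1, Category.comp_id]) (by rw [hdb2, Category.comp_id]) hV hU hP
    (by rw [hl1, Category.comp_id]) hl2 hp11 hp12 hp21 hp22
    ⟨hs, hs.isCoeqOf hsr hψ⟩).2.isRegEpi

theorem starPermutes_of_starUpperCuboidLemma (hN : IsIdeal N) (hker : HasNKernels N)
    (hsr : StarRegular 𝒞 N) (hcub : StarUpperCuboidLemma 𝒞 N) {X Y Z : 𝒞} (φ : X ⟶ Y)
    {ψ : X ⟶ Z} (hψ : IsRegEpi ψ) : StarPermutes N ψ φ := by
  intro T x z y hx hxz hzy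
  obtain ⟨R, e, he, he1, he2⟩ := Rel.exists_image (pullback.fst φ φ ≫ ψ) (pullback.snd φ φ ≫ ψ)
  obtain ⟨V, ν1, ν2, hV⟩ := exists_isStarPullbackRel hker (𝟙 X) (pullback.fst φ φ)
  obtain ⟨U, χ1, χ2, hU⟩ := exists_isStarPullbackRel hker ψ R.p1
  have hν : ν1 = ν2 ≫ pullback.fst φ φ := by simpa using hV.2.1
  obtain ⟨lam, hl1, hl2⟩ := hU.exists_lift ν1 (ν2 ≫ e) hV.1
    (by rw [Category.assoc, he1, hν, Category.assoc])
  have hlam := isRegEpi_of_starUpperCuboidLemma hN hker hsr hcub hψ he he1 he2 hV hU hl1 hl2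
  obtain ⟨η, hη1, hη2⟩ := hU.exists_lift x (pullback.lift z y hzy ≫ e) hx
    (by rw [hxz, Category.assoc, he1, pullback.lift_fst_assoc])
  obtain ⟨Q, q, ζ, hq, hζ⟩ := hlam.exists_cover_lift η
  have hζx : ζ ≫ ν2 ≫ pullback.fst φ φ = q ≫ x := by
    rw [← hν, ← hl1, ← reassoc_of% hζ, hη1]
  refine ⟨Q, q, ζ ≫ ν2 ≫ pullback.snd φ φ, hq, ?_, ?_⟩
  · rw [← reassoc_of% hζx]
    simp only [Category.assoc, pullback.condition]
  · rw [Category.assoc, Category.assoc, ← he2, ← reassoc_of% hl2, ← reassoc_of% hζ,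
      reassoc_of% hη2, he2, pullback.lift_snd_assoc]

end Backward

/-- A star-regular category with saturating regular
epimorphisms, enough trivial objects and `N`-trivial objects closed under binary
products is 2-star-permutable iff the Star-Upper Cuboid Lemma holds in it. -/
theorem statement12 [HasFiniteLimits 𝒞]
    (hcoeq : KernelPairsHaveCoequalisers 𝒞) (hstab : RegEpisStable 𝒞)
    (N : MorphismProperty 𝒞) (hN : IsIdeal N) (hker : HasNKernels N)
    (hsr : StarRegular 𝒞 N)
    (hsat : ∀ {X Y : 𝒞} (f : X ⟶ Y), IsRegEpi f → Saturating N f)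
    (htriv : EnoughTrivialObjects N)
    (hprod : ∀ X Y : 𝒞, NTrivial N X → NTrivial N Y → NTrivial N (X ⨯ Y)) :
    TwoStarPermutable 𝒞 N ↔ StarUpperCuboidLemma 𝒞 N := by
  have := regular_of_regEpisStable hcoeq hstab
  rw [twoStarPermutable_iff_starPermutes hN hker]
  exact ⟨starUpperCuboidLemma_of_starPermutes hN hker hsr hsat htriv hprod,
    fun hcub _ _ _ f g hf _ => starPermutes_of_starUpperCuboidLemma hN hker hsr hcub g hf⟩

end Paper
end
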